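/- Let ρ > 1, α ∈ (0,1)∪(1,∞), and define c_α^{(n)}(ρ) := log n − min_{P ∈ P_n(ρ)} H_α(P) for integers n ≥ 2 (with c_α^{(1)}(ρ) := 0), and let c_α^{(∞)}(ρ) := (1/(α−1))·log(1 + (1 + α(ρ−1) − ρ^α)/((1−α)(ρ−1))) − (α/(α−1))·log(1 + (1 + α(ρ−1) − ρ^α)/((1−α)(ρ^α−1))). Then for every n ∈ ℕ, 0 ≤ c_α^{(n)}(ρ) ≤ c_α^{(2n)}(ρ) ≤ c_α^{(∞)}(ρ) ≤ log ρ. -/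

import Mathlib

open Finset

/-- `P` is a probability mass function, strictly positive on `{1,…,n}`. -/
def IsPMF (n : ℕ) (P : ℕ → ℝ) : Prop :=
  (∀ i ∈ Finset.Icc 1 n, 0 < P i) ∧ ∑ i ∈ Finset.Icc 1 n, P i = 1

/-- The ratio of the maximal to minimal mass of `P` on `{1,…,n}` is at most `ρ`. -/
def RatioBdd (n : ℕ) (ρ : ℝ) (P : ℕ → ℝ) : Prop :=
  ∀ i ∈ Finset.Icc 1 n, ∀ j ∈ Finset.Icc 1 n, P i ≤ ρ * P j

/-- `P` is nonincreasing on `{1,…,n}`. -/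
def DecOn (n : ℕ) (P : ℕ → ℝ) : Prop :=
  ∀ i ∈ Finset.Icc 1 n, ∀ j ∈ Finset.Icc 1 n, i ≤ j → P j ≤ P i

/-- Sum of the `k` largest masses of `P` on `{1,…,n}`. -/
noncomputable def topSum (n : ℕ) (P : ℕ → ℝ) (k : ℕ) : ℝ :=
  sSup ((fun s : Finset ℕ => ∑ i ∈ s, P i) '' {s | s ⊆ Finset.Icc 1 n ∧ s.card = k})

/-- `P ≺ Q`: `P` is majorized by `Q`, both viewed on `{1,…,n}`. -/
def MajorizedBy (n : ℕ) (P Q : ℕ → ℝ) : Prop :=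
  ∀ k, 1 ≤ k → k ≤ n - 1 → topSum n P k ≤ topSum n Q k

/-- Zero-padding of a pmf on `{1,…,m}` outside of `{1,…,m}`. -/
def padTo (m : ℕ) (Q : ℕ → ℝ) : ℕ → ℝ := fun i => if i ≤ m then Q i else 0

/-- Rényi entropy of order `α` of `P` on `{1,…,n}` (Shannon entropy for `α = 1`);
natural logarithms. -/
noncomputable def renyiH (n : ℕ) (α : ℝ) (P : ℕ → ℝ) : ℝ :=
  if α = 1 then -∑ i ∈ Finset.Icc 1 n, P i * Real.log (P i)
  else (1 - α)⁻¹ * Real.log (∑ i ∈ Finset.Icc 1 n, P i ^ α)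

/-- `c_α^{(n)}(ρ) = log n − min_{P ∈ 𝒫_n(ρ)} H_α(P)` for `n ≥ 2`, and `0` for `n ≤ 1`. -/
noncomputable def cN (α ρ : ℝ) (n : ℕ) : ℝ :=
  if n ≤ 1 then 0
  else Real.log n - sInf (renyiH n α '' {P | IsPMF n P ∧ RatioBdd n ρ P})

/-- The closed-form expression for `c_α^{(∞)}(ρ)`, `α ∈ (0,1) ∪ (1,∞)`. -/
noncomputable def cInfinity (α ρ : ℝ) : ℝ :=
  (α - 1)⁻¹ * Real.log (1 + (1 + α * (ρ - 1) - ρ ^ α) / ((1 - α) * (ρ - 1)))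
    - α / (α - 1) * Real.log (1 + (1 + α * (ρ - 1) - ρ ^ α) / ((1 - α) * (ρ ^ α - 1)))

/-- `v(α) := c_α^{(∞)}(2)`, with the continuous extension at `α = 1`. -/
noncomputable def vFun (α : ℝ) : ℝ :=
  if α = 1 then Real.log (2 / (Real.exp 1 * Real.log 2))
  else Real.log ((α - 1) / ((2 : ℝ) ^ α - 2)) - α / (α - 1) * Real.log (α / ((2 : ℝ) ^ α - 1))

/-- `n*`: the maximal `i ∈ {1,…,m−1}` with `P i ≥ (m−i)⁻¹ ∑_{j=i+1}^n P j`. -/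
noncomputable def nStar (n m : ℕ) (P : ℕ → ℝ) : ℕ :=
  sSup {i : ℕ | 1 ≤ i ∧ i ≤ m - 1 ∧
    ((m : ℝ) - (i : ℝ))⁻¹ * ∑ j ∈ Finset.Icc (i + 1) n, P j ≤ P i}

/-- The pmf of `X̃_m` on `{1,…,m}`, built from a nonincreasing pmf `P` on `{1,…,n}`. -/
noncomputable def tildeX (n m : ℕ) (P : ℕ → ℝ) : ℕ → ℝ := fun i =>
  if P 1 < 1 / (m : ℝ) then 1 / (m : ℝ)
  else if i ≤ nStar n m P then P i
  else ((m : ℝ) - (nStar n m P : ℝ))⁻¹ * ∑ j ∈ Finset.Icc (nStar n m P + 1) n, P j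

/-- The pmf of `Ỹ_m` on `{1,…,m}`. -/
def tildeY (n m : ℕ) (P : ℕ → ℝ) : ℕ → ℝ := fun i =>
  if i = 1 then ∑ j ∈ Finset.Icc 1 (n - m + 1), P j else P (n - m + i)

/-- The pmf of `f(X)`: `(push n f P) j = ∑_{i ∈ {1,…,n}, f i = j} P i`. -/
def push (n : ℕ) (f : ℕ → ℕ) (P : ℕ → ℝ) : ℕ → ℝ := fun j =>
  ∑ i ∈ (Finset.Icc 1 n).filter (fun i => f i = j), P i

/-- The set `{1,…,n}^k` of source sequences of length `k`. -/
def seqSet (n k : ℕ) : Finset (Fin k → ℕ) := Fintype.piFinset fun _ => Finset.Icc 1 n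

/-- Product (i.i.d.) probability of a sequence. -/
def prodP (k : ℕ) (P : ℕ → ℝ) (x : Fin k → ℕ) : ℝ := ∏ i, P (x i)

/-- `g` is a ranking function for the i.i.d. vector on `{1,…,n}^k` with marginal `P`:
a bijection onto `{1,…,n^k}` which assigns smaller ranks to larger masses. -/
def IsRanking (n k : ℕ) (P : ℕ → ℝ) (g : (Fin k → ℕ) → ℕ) : Prop :=
  Set.BijOn g (↑(seqSet n k)) (Set.Icc 1 (n ^ k)) ∧
    ∀ x ∈ seqSet n k, ∀ y ∈ seqSet n k, prodP k P y < prodP k P x → g x < g y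

/-- The `ρ`-th guessing moment `E[g(Z^k)^ρ]`. -/
noncomputable def gmoment (n k : ℕ) (P : ℕ → ℝ) (g : (Fin k → ℕ) → ℕ) (ρ : ℝ) : ℝ :=
  ∑ x ∈ seqSet n k, prodP k P x * (g x : ℝ) ^ ρ

/-- Kraft inequality for a `D`-ary length function on `{1,…,n}^k`. -/
def Kraft (n k D : ℕ) (ℓ : (Fin k → ℕ) → ℕ) : Prop :=
  ∑ x ∈ seqSet n k, (D : ℝ) ^ (-(ℓ x : ℝ)) ≤ 1

/-- Scaled cumulant generating function `Λ_k(ρ)` of the codeword lengths (base-`D` log). -/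
noncomputable def cgf (n k D : ℕ) (P : ℕ → ℝ) (ℓ : (Fin k → ℕ) → ℕ) (ρ : ℝ) : ℝ :=
  (1 / (k : ℝ)) * Real.logb D (∑ x ∈ seqSet n k, prodP k P x * (D : ℝ) ^ (ρ * (ℓ x : ℝ)))

/-- `i_β` of Lemma 2. -/
noncomputable def iBeta (n : ℕ) (ρ β : ℝ) : ℕ := Nat.floor ((1 - (n : ℝ) * β) / ((ρ - 1) * β))

/-- The pmf `Q_β` of Lemma 2. -/
noncomputable def Qbeta (n : ℕ) (ρ β : ℝ) : ℕ → ℝ := fun j =>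
  if j ≤ iBeta n ρ β then ρ * β
  else if j = iBeta n ρ β + 1 then
    1 - ((n : ℝ) + (iBeta n ρ β : ℝ) * ρ - (iBeta n ρ β : ℝ) - 1) * β
  else β

/-!
Every inequality about `t ↦ t ^ α` below is multiplied by `α - 1`, so that the convex case
`α > 1` and the concave case `α < 1` are handled at once.

Let `P ∈ 𝒫_n(ρ)` have minimal mass `β`, so that all masses lie in `[β, ρβ]`. Bounding each `P i ^ α`
by the chord of `t ↦ t ^ α` over `[β, ρβ]` and summing, `n ^ (α - 1) * ∑ P i ^ α` is controlled by
`chordBound α ρ (n * β)`. Up to the positive factor `tangentScale α ρ`, this is the tangent line of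
`t ↦ t ^ α` at `n * β` evaluated at `xStar α ρ`, so the tangent-line (Bernoulli) inequality bounds it
by `tangentScale α ρ * xStar α ρ ^ α = exp ((α - 1) * c_α^{(∞)}(ρ))`. This gives
`H_α(P) ≥ log n - c_α^{(∞)}(ρ)`. The uniform pmf gives `c_α^{(n)}(ρ) ≥ 0`; halving every mass of `P`
gives a pmf in `𝒫_{2n}(ρ)` with entropy `log 2 + H_α(P)`, whence `c_α^{(n)}(ρ) ≤ c_α^{(2n)}(ρ)`; and
`c_α^{(∞)}(ρ) ≤ log ρ` is the tangent-line inequality at `ρ` together with `xStar α ρ ≤ 1`.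
-/

open Real

lemma sub_one_mul_tangent_le_rpow {α a b : ℝ} (hα : 0 ≤ α) (ha : 0 < a) (hb : 0 ≤ b) :
    (α - 1) * (a ^ α + α * a ^ (α - 1) * (b - a)) ≤ (α - 1) * b ^ α := by
  have hs : -1 ≤ b / a - 1 := by linarith [div_nonneg hb ha.le]
  have bernoulli : (α - 1) * (1 + α * (b / a - 1)) ≤ (α - 1) * (1 + (b / a - 1)) ^ α := by
    rcases le_total α 1 with h | h
    · exact mul_le_mul_of_nonpos_left (rpow_one_add_le_one_add_mul_self hs hα h) (by linarith)
    · exact mul_le_mul_of_nonneg_left (one_add_mul_self_le_rpow_one_add hs h) (by linarith)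
  rw [add_sub_cancel, div_rpow hb ha.le] at bernoulli
  have haα : 0 < a ^ α := rpow_pos_of_pos ha α
  calc (α - 1) * (a ^ α + α * a ^ (α - 1) * (b - a))
      = a ^ α * ((α - 1) * (1 + α * (b / a - 1))) := by
        rw [rpow_sub_one ha.ne']; field_simp
    _ ≤ a ^ α * ((α - 1) * (b ^ α / a ^ α)) := mul_le_mul_of_nonneg_left bernoulli haα.le
    _ = (α - 1) * b ^ α := by field_simp

lemma sub_one_mul_rpow_le_chord {α a b p : ℝ} (hα : 0 ≤ α) (ha : 0 ≤ a) (hap : a ≤ p)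
    (hpb : p ≤ b) :
    (α - 1) * ((b - a) * p ^ α) ≤ (α - 1) * ((b - p) * a ^ α + (p - a) * b ^ α) := by
  rcases hap.eq_or_lt with rfl | hap
  · simp
  rcases hpb.eq_or_lt with rfl | hpb
  · simp
  have hb : b ∈ Set.Ici (0 : ℝ) := Set.mem_Ici.2 (by linarith)
  rcases le_total α 1 with h | h
  · have := (concaveOn_rpow hα h).neg.secant_mono_aux1 (Set.mem_Ici.2 ha) hb hap hpb
    simp only [Pi.neg_apply] at this
    exact mul_le_mul_of_nonpos_left (by linarith) (by linarith)
  · have := (convexOn_rpow h).secant_mono_aux1 (Set.mem_Ici.2 ha) hb hap hpb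
    exact mul_le_mul_of_nonneg_left this (by linarith)

lemma inv_mul_log_le_inv_mul_log {s a b : ℝ} (ha : 0 < a) (hb : 0 < b) (h : s * a ≤ s * b) :
    s⁻¹ * log a ≤ s⁻¹ * log b := by
  rcases lt_trichotomy s 0 with hs | rfl | hs
  · exact mul_le_mul_of_nonpos_left (log_le_log hb ((mul_le_mul_left_of_neg hs).1 h))
      (inv_nonpos.2 hs.le)
  · simp
  · exact mul_le_mul_of_nonneg_left (log_le_log ha ((mul_le_mul_iff_right₀ hs).1 h))
      (inv_nonneg.2 hs.le)

lemma sub_one_mul_rpow_sub_self_pos {α ρ : ℝ} (hρ : 1 < ρ) (hα1 : α ≠ 1) :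
    0 < (α - 1) * (ρ ^ α - ρ) := by
  rcases hα1.lt_or_gt with h | h
  · have := rpow_lt_rpow_of_exponent_lt hρ h
    rw [rpow_one] at this
    exact mul_pos_of_neg_of_neg (by linarith) (by linarith)
  · have := rpow_lt_rpow_of_exponent_lt hρ h
    rw [rpow_one] at this
    exact mul_pos (by linarith) (by linarith)

noncomputable def xStar (α ρ : ℝ) : ℝ := (α - 1) * (ρ ^ α - 1) / (α * (ρ ^ α - ρ))

noncomputable def tangentScale (α ρ : ℝ) : ℝ := (ρ ^ α - ρ) / ((α - 1) * (ρ - 1))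

noncomputable def chordBound (α ρ x : ℝ) : ℝ :=
  x ^ (α - 1) * (ρ ^ α - 1 - (ρ ^ α - ρ) * x) / (ρ - 1)

section Extremal

variable {α ρ : ℝ}

lemma tangentScale_pos (hρ : 1 < ρ) (hα1 : α ≠ 1) : 0 < tangentScale α ρ := by
  have h := sub_one_mul_rpow_sub_self_pos hρ hα1
  refine div_pos_iff.2 (pos_and_pos_or_neg_and_neg_of_mul_pos ?_)
  calc 0 < (α - 1) * (ρ ^ α - ρ) * (ρ - 1) := mul_pos h (by linarith)
    _ = _ := by ring

lemma xStar_pos (hρ : 1 < ρ) (hα : 0 < α) (hα1 : α ≠ 1) : 0 < xStar α ρ := by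
  have h := sub_one_mul_rpow_sub_self_pos hρ hα1
  have hρα := one_lt_rpow hρ hα
  refine div_pos_iff.2 (pos_and_pos_or_neg_and_neg_of_mul_pos ?_)
  calc 0 < (α - 1) * (ρ ^ α - ρ) * (α * (ρ ^ α - 1)) := mul_pos h (by nlinarith)
    _ = _ := by ring

lemma xStar_le_one (hρ : 1 < ρ) (hα : 0 < α) (hα1 : α ≠ 1) : xStar α ρ ≤ 1 := by
  have h := sub_one_mul_rpow_sub_self_pos hρ hα1
  have hD : 0 < α * (α - 1) * (ρ ^ α - ρ) := by rw [mul_assoc]; positivity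
  have hL := right_ne_zero_of_mul h.ne'
  have hα1' : α - 1 ≠ 0 := sub_ne_zero.2 hα1
  have tangent := sub_one_mul_tangent_le_rpow hα.le one_pos (by linarith : (0 : ℝ) ≤ ρ)
  rw [one_rpow, one_rpow, mul_one] at tangent
  have h1 : 1 - xStar α ρ
      = (α - 1) * (ρ ^ α - (1 + α * (ρ - 1))) / (α * (α - 1) * (ρ ^ α - ρ)) := by
    rw [xStar]; field_simp; ring
  have : 0 ≤ 1 - xStar α ρ := by
    rw [h1]; exact div_nonneg (by nlinarith) hD.le
  linarith

lemma chordBound_eq (hρ : 1 < ρ) (hα : 0 < α) (hα1 : α ≠ 1) {x : ℝ} (hx : 0 < x) :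
    chordBound α ρ x
      = tangentScale α ρ * (x ^ α + α * x ^ (α - 1) * (xStar α ρ - x)) := by
  have hL := right_ne_zero_of_mul (sub_one_mul_rpow_sub_self_pos hρ hα1).ne'
  have hα1' : α - 1 ≠ 0 := sub_ne_zero.2 hα1
  have hρ1 : ρ - 1 ≠ 0 := by linarith
  rw [chordBound, tangentScale, xStar, rpow_sub_one hx.ne']
  field_simp
  ring

lemma sub_one_mul_chordBound_le (hρ : 1 < ρ) (hα : 0 < α) (hα1 : α ≠ 1) {x : ℝ} (hx : 0 < x) :
    (α - 1) * chordBound α ρ x ≤ (α - 1) * (tangentScale α ρ * xStar α ρ ^ α) := by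
  have tangent := sub_one_mul_tangent_le_rpow hα.le hx (xStar_pos hρ hα hα1).le
  rw [chordBound_eq hρ hα hα1 hx, mul_left_comm, mul_left_comm _ (tangentScale α ρ)]
  exact mul_le_mul_of_nonneg_left tangent (tangentScale_pos hρ hα1).le

lemma cInfinity_eq (hρ : 1 < ρ) (hα : 0 < α) (hα1 : α ≠ 1) :
    cInfinity α ρ = (α - 1)⁻¹ * log (tangentScale α ρ * xStar α ρ ^ α) := by
  have hL := right_ne_zero_of_mul (sub_one_mul_rpow_sub_self_pos hρ hα1).ne'
  have hα1' : α - 1 ≠ 0 := sub_ne_zero.2 hα1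
  have hρ1 : ρ - 1 ≠ 0 := by linarith
  have hρα : ρ ^ α - 1 ≠ 0 := by linarith [one_lt_rpow hρ hα]
  have hx := xStar_pos hρ hα hα1
  have h1 : 1 + (1 + α * (ρ - 1) - ρ ^ α) / ((1 - α) * (ρ - 1)) = tangentScale α ρ := by
    rw [tangentScale]; field_simp; ring
  have h2 : 1 + (1 + α * (ρ - 1) - ρ ^ α) / ((1 - α) * (ρ ^ α - 1)) = (xStar α ρ)⁻¹ := by
    rw [xStar]; field_simp; ring
  rw [cInfinity, h1, h2, log_mul (tangentScale_pos hρ hα1).ne' (rpow_pos_of_pos hx α).ne',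
    log_inv, log_rpow hx]
  field_simp
  ring

theorem cInfinity_le_log (hρ : 1 < ρ) (hα : 0 < α) (hα1 : α ≠ 1) :
    cInfinity α ρ ≤ log ρ := by
  have hρ0 : 0 < ρ := by linarith
  have hα1' : α - 1 ≠ 0 := sub_ne_zero.2 hα1
  have hx := xStar_pos hρ hα hα1
  have hcx := mul_pos (tangentScale_pos hρ hα1) hx
  have hsplit : tangentScale α ρ * xStar α ρ ^ α
      = tangentScale α ρ * xStar α ρ * xStar α ρ ^ (α - 1) := by
    rw [rpow_sub_one hx.ne']; field_simp
  have hmean : tangentScale α ρ * xStar α ρ = (ρ ^ α - 1) / (α * (ρ - 1)) := by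
    have hL := right_ne_zero_of_mul (sub_one_mul_rpow_sub_self_pos hρ hα1).ne'
    have hρ1 : ρ - 1 ≠ 0 := by linarith
    rw [tangentScale, xStar]; field_simp
  have tangent := sub_one_mul_tangent_le_rpow hα.le hρ0 zero_le_one
  rw [one_rpow] at tangent
  have hmean_le : (α - 1) * (tangentScale α ρ * xStar α ρ) ≤ (α - 1) * ρ ^ (α - 1) := by
    rw [hmean, mul_div_assoc', div_le_iff₀ (mul_pos hα (by linarith))]
    rw [rpow_sub_one hρ0.ne'] at tangent ⊢
    field_simp at tangent ⊢
    linarith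
  have hlog := inv_mul_log_le_inv_mul_log hcx (rpow_pos_of_pos hρ0 _) hmean_le
  rw [log_rpow hρ0, inv_mul_cancel_left₀ hα1'] at hlog
  rw [cInfinity_eq hρ hα hα1, hsplit, log_mul hcx.ne' (rpow_pos_of_pos hx _).ne', log_rpow hx,
    mul_add, inv_mul_cancel_left₀ hα1']
  linarith [log_nonpos hx.le (xStar_le_one hρ hα hα1)]

end Extremal

section LowerBound

variable {α ρ : ℝ}

lemma sub_one_mul_sum_rpow_le_chordBound (hρ : 1 < ρ) (hα : 0 ≤ α) {n : ℕ} {P : ℕ → ℝ}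
    {β : ℝ} (hβ : 0 < β) (hsum : ∑ i ∈ Icc 1 n, P i = 1)
    (hP : ∀ i ∈ Icc 1 n, β ≤ P i ∧ P i ≤ ρ * β) :
    (α - 1) * ((n : ℝ) ^ (α - 1) * ∑ i ∈ Icc 1 n, P i ^ α)
      ≤ (α - 1) * chordBound α ρ (n * β) := by
  have hcard : ((Icc 1 n).card : ℝ) = n := by simp
  have chords := sum_le_sum fun i hi =>
    sub_one_mul_rpow_le_chord hα hβ.le (hP i hi).1 (hP i hi).2
  simp only [← mul_sum, ← sum_mul, sum_add_distrib, sum_sub_distrib, sum_const, hcard, hsum,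
    nsmul_eq_mul, mul_rpow (by linarith : (0 : ℝ) ≤ ρ) hβ.le] at chords
  have hn : (0 : ℝ) < n := by
    rcases n with _ | n
    · simp at hsum
    · positivity
  have hρ1 : (0 : ℝ) < ρ - 1 := by linarith
  calc (α - 1) * ((n : ℝ) ^ (α - 1) * ∑ i ∈ Icc 1 n, P i ^ α)
      = (n : ℝ) ^ (α - 1) / ((ρ - 1) * β) * ((α - 1) * ((ρ * β - β) * ∑ i ∈ Icc 1 n, P i ^ α)) := by
        field_simp
    _ ≤ (n : ℝ) ^ (α - 1) / ((ρ - 1) * β)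
          * ((α - 1) * ((ρ * (n * β) - 1) * β ^ α + (1 - n * β) * (ρ ^ α * β ^ α))) :=
        mul_le_mul_of_nonneg_left chords (by positivity)
    _ = (α - 1) * chordBound α ρ (n * β) := by
        rw [chordBound, mul_rpow hn.le hβ.le, rpow_sub_one hβ.ne']
        field_simp
        ring

theorem log_sub_cInfinity_le_renyiH (hρ : 1 < ρ) (hα : 0 < α) (hα1 : α ≠ 1) {n : ℕ}
    {P : ℕ → ℝ} (hP : IsPMF n P) (hPρ : RatioBdd n ρ P) :
    log n - cInfinity α ρ ≤ renyiH n α P := by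
  obtain ⟨hpos, hsum⟩ := hP
  have hne : (Icc 1 n).Nonempty := nonempty_of_sum_ne_zero (by rw [hsum]; exact one_ne_zero)
  obtain ⟨j, hj, hmin⟩ := exists_min_image (Icc 1 n) P hne
  have hn : (0 : ℝ) < n := by
    obtain ⟨i, hi⟩ := hne
    have := mem_Icc.1 hi
    exact_mod_cast (show 0 < n by omega)
  set S := ∑ i ∈ Icc 1 n, P i ^ α
  have hS : 0 < S := sum_pos (fun i hi => rpow_pos_of_pos (hpos i hi) α) hne
  have hbound : (α - 1) * ((n : ℝ) ^ (α - 1) * S)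
      ≤ (α - 1) * (tangentScale α ρ * xStar α ρ ^ α) :=
    (sub_one_mul_sum_rpow_le_chordBound hρ hα.le (hpos j hj) hsum
      fun i hi => ⟨hmin i hi, hPρ i hi j hj⟩).trans
      (sub_one_mul_chordBound_le hρ hα hα1 (mul_pos hn (hpos j hj)))
  have hlog := inv_mul_log_le_inv_mul_log (by positivity)
    (mul_pos (tangentScale_pos hρ hα1) (rpow_pos_of_pos (xStar_pos hρ hα hα1) α)) hbound
  rw [log_mul (rpow_pos_of_pos hn _).ne' hS.ne', log_rpow hn, mul_add,
    inv_mul_cancel_left₀ (sub_ne_zero.2 hα1)] at hlog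
  rw [renyiH, if_neg hα1, cInfinity_eq hρ hα hα1, ← neg_sub α 1, inv_neg]
  linarith

end LowerBound

section Uniform

variable {n : ℕ}

lemma isPMF_uniform (hn : 0 < n) : IsPMF n fun _ => 1 / (n : ℝ) := by
  refine ⟨fun _ _ => by positivity, ?_⟩
  rw [sum_const, Nat.card_Icc, Nat.add_sub_cancel, nsmul_eq_mul]
  field_simp

lemma ratioBdd_uniform {ρ : ℝ} (hρ : 1 ≤ ρ) : RatioBdd n ρ fun _ => 1 / (n : ℝ) :=
  fun _ _ _ _ => le_mul_of_one_le_left (by positivity) hρ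

lemma renyiH_uniform {α : ℝ} (hα1 : α ≠ 1) (hn : 0 < n) :
    renyiH n α (fun _ => 1 / (n : ℝ)) = log n := by
  have hn' : (0 : ℝ) < n := by exact_mod_cast hn
  rw [renyiH, if_neg hα1, sum_const, Nat.card_Icc, Nat.add_sub_cancel, nsmul_eq_mul,
    one_div, inv_rpow hn'.le, log_mul hn'.ne' (by positivity), log_inv, log_rpow hn']
  field_simp [sub_ne_zero.2 hα1.symm]
  ring

end Uniform

noncomputable def splitHalves (P : ℕ → ℝ) (i : ℕ) : ℝ := P ((i + 1) / 2) / 2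

lemma sum_Icc_two_mul_succ_div_two (f : ℕ → ℝ) (n : ℕ) :
    ∑ i ∈ Icc 1 (2 * n), f ((i + 1) / 2) = 2 * ∑ i ∈ Icc 1 n, f i := by
  induction n with
  | zero => simp
  | succ n ih =>
    rw [show 2 * (n + 1) = 2 * n + 1 + 1 by ring, sum_Icc_succ_top (by omega),
      sum_Icc_succ_top (by omega), ih, sum_Icc_succ_top (by omega)]
    rw [show (2 * n + 1 + 1) / 2 = n + 1 by omega, show (2 * n + 1 + 1 + 1) / 2 = n + 1 by omega]
    ring

section Split

variable {n : ℕ} {P : ℕ → ℝ}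

lemma IsPMF.splitHalves (hP : IsPMF n P) : IsPMF (2 * n) (splitHalves P) := by
  obtain ⟨hpos, hsum⟩ := hP
  refine ⟨fun i hi => half_pos (hpos _ ?_), ?_⟩
  · rw [mem_Icc] at hi ⊢; omega
  · simp only [_root_.splitHalves]
    rw [sum_Icc_two_mul_succ_div_two (fun j => P j / 2), ← sum_div, hsum]
    norm_num

lemma RatioBdd.splitHalves {ρ : ℝ} (hP : RatioBdd n ρ P) :
    RatioBdd (2 * n) ρ (splitHalves P) := by
  intro i hi j hj
  rw [mem_Icc] at hi hj
  have := hP ((i + 1) / 2) (mem_Icc.2 (by omega)) ((j + 1) / 2) (mem_Icc.2 (by omega))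
  rw [_root_.splitHalves, _root_.splitHalves, mul_div_assoc']
  exact div_le_div_of_nonneg_right this zero_le_two

lemma renyiH_splitHalves {α : ℝ} (hα1 : α ≠ 1) (hP : IsPMF n P) :
    renyiH (2 * n) α (splitHalves P) = log 2 + renyiH n α P := by
  obtain ⟨hpos, hsum⟩ := hP
  have hS : 0 < ∑ i ∈ Icc 1 n, P i ^ α :=
    sum_pos (fun i hi => rpow_pos_of_pos (hpos i hi) α)
      (nonempty_of_sum_ne_zero (by rw [hsum]; exact one_ne_zero))
  have hsplit : ∑ i ∈ Icc 1 (2 * n), splitHalves P i ^ α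
      = 2 ^ (1 - α) * ∑ i ∈ Icc 1 n, P i ^ α := by
    simp only [splitHalves]
    rw [sum_Icc_two_mul_succ_div_two (fun j => (P j / 2) ^ α), mul_sum, mul_sum]
    refine sum_congr rfl fun i hi => ?_
    rw [div_rpow (hpos i hi).le zero_le_two, rpow_sub two_pos, rpow_one]
    field_simp
  rw [renyiH, renyiH, if_neg hα1, if_neg hα1, hsplit, log_mul (by positivity) hS.ne',
    log_rpow two_pos]
  field_simp [sub_ne_zero.2 hα1.symm]

end Split

noncomputable def minRenyiH (α ρ : ℝ) (m : ℕ) : ℝ :=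
  sInf (renyiH m α '' {P | IsPMF m P ∧ RatioBdd m ρ P})

section MinRenyiH

variable {α ρ : ℝ} {m : ℕ}

lemma cN_eq_log_sub_minRenyiH (hm : 2 ≤ m) : cN α ρ m = log m - minRenyiH α ρ m := by
  rw [cN, if_neg (by omega), minRenyiH]

lemma bddBelow_renyiH_image (hρ : 1 < ρ) (hα : 0 < α) (hα1 : α ≠ 1) :
    BddBelow (renyiH m α '' {P | IsPMF m P ∧ RatioBdd m ρ P}) := by
  refine ⟨log m - cInfinity α ρ, ?_⟩
  rintro _ ⟨P, ⟨hP, hPρ⟩, rfl⟩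
  exact log_sub_cInfinity_le_renyiH hρ hα hα1 hP hPρ

lemma minRenyiH_le (hρ : 1 < ρ) (hα : 0 < α) (hα1 : α ≠ 1) {P : ℕ → ℝ} (hP : IsPMF m P)
    (hPρ : RatioBdd m ρ P) : minRenyiH α ρ m ≤ renyiH m α P :=
  csInf_le (bddBelow_renyiH_image hρ hα hα1) ⟨P, ⟨hP, hPρ⟩, rfl⟩

lemma minRenyiH_le_log (hρ : 1 < ρ) (hα : 0 < α) (hα1 : α ≠ 1) (hm : 0 < m) :
    minRenyiH α ρ m ≤ log m := by
  simpa only [renyiH_uniform hα1 hm] using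
    minRenyiH_le hρ hα hα1 (isPMF_uniform hm) (ratioBdd_uniform hρ.le)

lemma renyiH_image_nonempty (hρ : 1 ≤ ρ) (hm : 0 < m) :
    (renyiH m α '' {P | IsPMF m P ∧ RatioBdd m ρ P}).Nonempty :=
  ⟨_, _, ⟨isPMF_uniform hm, ratioBdd_uniform hρ⟩, rfl⟩

lemma log_sub_cInfinity_le_minRenyiH (hρ : 1 < ρ) (hα : 0 < α) (hα1 : α ≠ 1) (hm : 0 < m) :
    log m - cInfinity α ρ ≤ minRenyiH α ρ m := by
  refine le_csInf (renyiH_image_nonempty hρ.le hm) ?_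
  rintro _ ⟨P, ⟨hP, hPρ⟩, rfl⟩
  exact log_sub_cInfinity_le_renyiH hρ hα hα1 hP hPρ

lemma minRenyiH_two_mul_le (hρ : 1 < ρ) (hα : 0 < α) (hα1 : α ≠ 1) (hm : 0 < m) :
    minRenyiH α ρ (2 * m) ≤ log 2 + minRenyiH α ρ m := by
  suffices minRenyiH α ρ (2 * m) - log 2 ≤ minRenyiH α ρ m by linarith
  refine le_csInf (renyiH_image_nonempty hρ.le hm) ?_
  rintro _ ⟨P, ⟨hP, hPρ⟩, rfl⟩
  have := minRenyiH_le hρ hα hα1 hP.splitHalves hPρ.splitHalves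
  rw [renyiH_splitHalves hα1 hP] at this
  linarith

lemma cInfinity_nonneg (hρ : 1 < ρ) (hα : 0 < α) (hα1 : α ≠ 1) : 0 ≤ cInfinity α ρ := by
  have h₁ := log_sub_cInfinity_le_minRenyiH hρ hα hα1 one_pos
  have h₂ := minRenyiH_le_log hρ hα hα1 one_pos
  simp only [Nat.cast_one, log_one] at h₁ h₂
  linarith

lemma cN_nonneg (hρ : 1 < ρ) (hα : 0 < α) (hα1 : α ≠ 1) (m : ℕ) : 0 ≤ cN α ρ m := by
  rcases le_or_gt m 1 with hm | hm
  · rw [cN, if_pos hm]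
  · rw [cN_eq_log_sub_minRenyiH hm]
    linarith [minRenyiH_le_log hρ hα hα1 (by omega : 0 < m)]

lemma cN_le_cInfinity (hρ : 1 < ρ) (hα : 0 < α) (hα1 : α ≠ 1) (m : ℕ) :
    cN α ρ m ≤ cInfinity α ρ := by
  rcases le_or_gt m 1 with hm | hm
  · rw [cN, if_pos hm]
    exact cInfinity_nonneg hρ hα hα1
  · rw [cN_eq_log_sub_minRenyiH hm]
    linarith [log_sub_cInfinity_le_minRenyiH hρ hα hα1 (by omega : 0 < m)]

lemma cN_le_cN_two_mul (hρ : 1 < ρ) (hα : 0 < α) (hα1 : α ≠ 1) (n : ℕ) :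
    cN α ρ n ≤ cN α ρ (2 * n) := by
  rcases le_or_gt n 1 with hn | hn
  · rw [cN, if_pos hn]
    exact cN_nonneg hρ hα hα1 _
  · rw [cN_eq_log_sub_minRenyiH hn, cN_eq_log_sub_minRenyiH (by omega), Nat.cast_mul,
      Nat.cast_ofNat, log_mul two_ne_zero (by positivity)]
    linarith [minRenyiH_two_mul_le hρ hα hα1 (by omega : 0 < n)]

end MinRenyiH

theorem stmt7_general (ρ α : ℝ) (hρ : 1 < ρ) (hα : 0 < α) (hα1 : α ≠ 1) (n : ℕ) :
    0 ≤ cN α ρ n ∧ cN α ρ n ≤ cN α ρ (2 * n) ∧ cN α ρ (2 * n) ≤ cInfinity α ρ ∧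
      cInfinity α ρ ≤ Real.log ρ :=
  ⟨cN_nonneg hρ hα hα1 n, cN_le_cN_two_mul hρ hα hα1 n, cN_le_cInfinity hρ hα hα1 _,
    cInfinity_le_log hρ hα hα1⟩

theorem stmt7 (ρ α : ℝ) (hρ : 1 < ρ) (hα : 0 < α) (hα1 : α ≠ 1) (n : ℕ) (hn : 1 ≤ n) :
    0 ≤ cN α ρ n ∧ cN α ρ n ≤ cN α ρ (2 * n) ∧ cN α ρ (2 * n) ≤ cInfinity α ρ ∧
      cInfinity α ρ ≤ Real.log ρ :=
  stmt7_general ρ α hρ hα hα1 n
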